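/- arXiv:2405.20713 — 2 statements merged into one kernel-verified Lean document; each statement's English description precedes it below -/
import Mathlib

section
/- Let κ, n, m ∈ ℕ, let R_n be a (κ+n)×n matrix over 𝔽₂ whose bottom n×n block is I_n, let R_m be any (κ+m)×m matrix over 𝔽₂, let T be a set of tweaks with t ∈ T, let H : 𝔽₂^{κ+n} × T → 𝔽₂^{κ+m} be an arbitrary function, let φ : 𝔽₂ⁿ → 𝔽₂^m, and let W_a ∈ 𝔽₂^{κ+n}, W_c ∈ 𝔽₂^{κ+m}. Define the garbled table G : 𝔽₂ⁿ → 𝔽₂^{κ+m} by G(p) := H(W_a + R_n·(p + lsb_n(W_a)), t) + W_c + R_m·φ(p + lsb_n(W_a)). Then for every x ∈ 𝔽₂ⁿ, G is the unique table satisfying G(lsb_n(W_a + R_n·x)) = H(W_a + R_n·x, t) + W_c + R_m·φ(x) for all x, and the evaluator's computation recovers the correct output label: G(lsb_n(W_a + R_n·x)) + H(W_a + R_n·x, t) = W_c + R_m·φ(x). -/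
def lsbn (κ n : ℕ) (W : Fin (κ + n) → ZMod 2) : Fin n → ZMod 2 :=
  fun i => W (Fin.natAdd κ i)

/-!
Because the bottom block of `R_n` is the identity, the pointer bits of `W_a^x` are
`lsb_n(W_a) + x`. Over `𝔽₂` translation by `lsb_n(W_a)` is its own inverse, so
`x ↦ lsb_n(W_a^x)` is a bijection of `𝔽₂ⁿ` whose inverse is `p ↦ p + lsb_n(W_a)`;
the table `G` is the ciphertext map precomposed with that inverse, which gives both
correctness and uniqueness. The evaluator's equation follows since `H + H = 0`.
-/

section Pointer

variable {κ n : ℕ}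

theorem lsbn_add (v w : Fin (κ + n) → ZMod 2) : lsbn κ n (v + w) = lsbn κ n v + lsbn κ n w :=
  rfl

theorem lsbn_mulVec {R : Matrix (Fin (κ + n)) (Fin n) (ZMod 2)}
    (hR : ∀ i j : Fin n, R (Fin.natAdd κ i) j = if i = j then 1 else 0) (x : Fin n → ZMod 2) :
    lsbn κ n (R.mulVec x) = x := by
  funext i
  simp [lsbn, Matrix.mulVec, dotProduct, hR]

theorem lsbn_add_mulVec {R : Matrix (Fin (κ + n)) (Fin n) (ZMod 2)}
    (hR : ∀ i j : Fin n, R (Fin.natAdd κ i) j = if i = j then 1 else 0)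
    (W : Fin (κ + n) → ZMod 2) (x : Fin n → ZMod 2) :
    lsbn κ n (W + R.mulVec x) = lsbn κ n W + x := by
  rw [lsbn_add, lsbn_mulVec hR]

end Pointer

/-- the garbled table `G` of a projection gate `Proj_φ`,
defined by `G p = H(W_a + R_n·(p + lsb_n W_a), t) + W_c + R_m·φ(p + lsb_n W_a)`,
is the unique table storing at index `lsb_n(W_a^x)` the ciphertext
`H(W_a^x, t) + W_c^{φ(x)}`, and the evaluator recovers the correct output
label: `G(lsb_n(W_a^x)) + H(W_a^x, t) = W_c + R_m·φ(x)`. -/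
theorem projection_gate_correct (κ n m : ℕ)
    (Rn : Matrix (Fin (κ + n)) (Fin n) (ZMod 2))
    (hRn : ∀ i j : Fin n, Rn (Fin.natAdd κ i) j = if i = j then 1 else 0)
    (Rm : Matrix (Fin (κ + m)) (Fin m) (ZMod 2))
    (T : Type*) (t : T)
    (H : (Fin (κ + n) → ZMod 2) → T → (Fin (κ + m) → ZMod 2))
    (φ : (Fin n → ZMod 2) → (Fin m → ZMod 2))
    (Wa : Fin (κ + n) → ZMod 2) (Wc : Fin (κ + m) → ZMod 2) :
    let G : (Fin n → ZMod 2) → (Fin (κ + m) → ZMod 2) := fun p =>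
      H (Wa + Rn.mulVec (p + lsbn κ n Wa)) t + Wc + Rm.mulVec (φ (p + lsbn κ n Wa))
    (∀ x : Fin n → ZMod 2,
        G (lsbn κ n (Wa + Rn.mulVec x)) =
          H (Wa + Rn.mulVec x) t + Wc + Rm.mulVec (φ x)) ∧
    (∀ G' : (Fin n → ZMod 2) → (Fin (κ + m) → ZMod 2),
        (∀ x : Fin n → ZMod 2,
          G' (lsbn κ n (Wa + Rn.mulVec x)) =
            H (Wa + Rn.mulVec x) t + Wc + Rm.mulVec (φ x)) → G' = G) ∧
    (∀ x : Fin n → ZMod 2,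
        G (lsbn κ n (Wa + Rn.mulVec x)) + H (Wa + Rn.mulVec x) t =
          Wc + Rm.mulVec (φ x)) := by
  intro G
  have decode_encode (x : Fin n → ZMod 2) : lsbn κ n (Wa + Rn.mulVec x) + lsbn κ n Wa = x := by
    rw [lsbn_add_mulVec hRn, add_right_comm, ZModModule.add_self, zero_add]
  have encode_decode (p : Fin n → ZMod 2) : lsbn κ n (Wa + Rn.mulVec (p + lsbn κ n Wa)) = p := by
    rw [lsbn_add_mulVec hRn, add_left_comm, ZModModule.add_self, add_zero]
  have hG (x : Fin n → ZMod 2) :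
      G (lsbn κ n (Wa + Rn.mulVec x)) = H (Wa + Rn.mulVec x) t + Wc + Rm.mulVec (φ x) := by
    simp only [G, decode_encode]
  refine ⟨hG, fun G' hG' => funext fun p => ?_, fun x => ?_⟩
  · calc G' p = G' (lsbn κ n (Wa + Rn.mulVec (p + lsbn κ n Wa))) := by rw [encode_decode]
      _ = G p := hG' _
  · rw [hG, add_assoc (H _ t), add_right_comm, ZModModule.add_self, zero_add]
end

section
/- The garbling scheme Π is correct for every choice of randomness and every hash function: for every circuit f built from XOR gates and projection gates, every input x, every function H : 𝔽₂^k × ℕ → 𝔽₂^k, every choice of wire-label-offset matrices R_1, …, R_n̄ (each R_n having bottom block I_n), and every choice of the uniformly-drawable zero-labels (one per input wire and one per projection-gate output wire), we have Decode(Eval(GC, Encode(e, x)), d) = f(x), where (GC, e, d) is the output of Garble on f and f(x) is the plaintext evaluation of the circuit. Precisely: if v_i denotes the plaintext value on wire i when the circuit is evaluated on x, then the label the evaluator computes on every wire i equals W_i^{0} + R_{ℓ(i)}·v_i, and hence d_i + lsb_{ℓ(i)} of the evaluator's output-wire label equals v_i for every output wire i. -/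
/-- An `n`-bit string is a vector in 𝔽₂ⁿ. -/
abbrev Bits (n : ℕ) : Type := Fin n → ZMod 2

/-- Cast an `a`-bit string along an equality of lengths. -/
def castBits {a b : ℕ} (h : a = b) (v : Bits a) : Bits b :=
  fun j => v (Fin.cast h.symm j)

/-- `lsb k n W` : the last `n` coordinates of `W ∈ 𝔽₂^k` (meaningful when `n ≤ k`). -/
def lsb {k : ℕ} (n : ℕ) (W : Bits k) : Bits n :=
  fun j => if h : k - n + (j : ℕ) < k then W ⟨k - n + (j : ℕ), h⟩ else 0

/-- A gate whose input wires have index `< bound` and whose output wire carries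
`outLen`-bit values; `ℓ` gives the bit-length of every wire. Either an XOR gate
on two earlier wires of the same bit-length, or a unary projection gate
computing an arbitrary function `φ`. -/
inductive Gate (ℓ : ℕ → ℕ) (bound outLen : ℕ) : Type
  | xor (a b : ℕ) (ha : a < bound) (hb : b < bound)
      (hla : ℓ a = outLen) (hlb : ℓ b = outLen) : Gate ℓ bound outLen
  | proj (a : ℕ) (ha : a < bound) (φ : Bits (ℓ a) → Bits outLen) : Gate ℓ bound outLen

/-- A circuit with `p` input wires (indices `0, …, p-1`) and `q` gates in
topological order; the `g`-th gate outputs wire `p + g` and may only use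
earlier wires. Wire `i` carries `ℓ i`-bit values with `ℓ i ≤ nbar`. -/
structure Circuit (nbar : ℕ) where
  p : ℕ
  q : ℕ
  ℓ : ℕ → ℕ
  hℓ : ∀ i, ℓ i ≤ nbar
  gates : (g : Fin q) → Gate ℓ (p + (g : ℕ)) (ℓ (p + (g : ℕ)))

/-- Plaintext evaluation: the value `v i` carried by wire `i` when the circuit
is evaluated on input `x`. -/
def Circuit.plainEval {nbar : ℕ} (C : Circuit nbar)
    (x : (i : ℕ) → Bits (C.ℓ i)) (i : ℕ) : Bits (C.ℓ i) :=
  if hp : i < C.p then x i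
  else if hq : i - C.p < C.q then
    have e : C.p + (i - C.p) = i := by omega
    match C.gates ⟨i - C.p, hq⟩ with
    | .xor a b ha hb hla hlb =>
        castBits (hla.trans (congrArg C.ℓ e)) (C.plainEval x a)
          + castBits (hlb.trans (congrArg C.ℓ e)) (C.plainEval x b)
    | .proj a ha φ =>
        castBits (congrArg C.ℓ e) (φ (C.plainEval x a))
  else 0
termination_by i
decreasing_by all_goals (simp only [Fin.val_mk] at *; omega)

/-- Garbling, zero-labels: input wires and projection outputs get the freely
chosen labels `W0 i`; an XOR gate's zero-label is the XOR of its input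
zero-labels. -/
def Circuit.zeroLabel {nbar : ℕ} (C : Circuit nbar) {k : ℕ}
    (W0 : ℕ → Bits k) (i : ℕ) : Bits k :=
  if hp : i < C.p then W0 i
  else if hq : i - C.p < C.q then
    match C.gates ⟨i - C.p, hq⟩ with
    | .xor a b _ _ _ _ => C.zeroLabel W0 a + C.zeroLabel W0 b
    | .proj _ _ _ => W0 i
  else 0
termination_by i
decreasing_by all_goals (simp only [Fin.val_mk] at *; omega)

/-- Garbling, the garbled table: for the projection gate `g` (with input wire
`a` of bit-length `n = ℓ a` and output wire `i = p + g`), the row stored at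
pointer index `lsb_n (W_a^x)` is `H(W_a^x, i) + W_i^0 + R_m·φ(x)`; i.e. the
row at index `ptr` corresponds to `x = ptr + lsb_n (W_a^0)`. XOR gates have no
table. -/
def Circuit.GC {nbar : ℕ} (C : Circuit nbar) {k : ℕ}
    (R : (n : ℕ) → Matrix (Fin k) (Fin n) (ZMod 2))
    (H : Bits k → ℕ → Bits k) (W0 : ℕ → Bits k)
    (g : Fin C.q) (n : ℕ) (ptr : Bits n) : Bits k :=
  match C.gates g with
  | .xor _ _ _ _ _ _ => 0
  | .proj a _ φ =>
      if hn : n = C.ℓ a then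
        let Wa0 := C.zeroLabel W0 a
        let x : Bits (C.ℓ a) := castBits hn (ptr + lsb n Wa0)
        H (Wa0 + (R (C.ℓ a)).mulVec x) (C.p + (g : ℕ))
          + C.zeroLabel W0 (C.p + (g : ℕ))
          + (R (C.ℓ (C.p + (g : ℕ)))).mulVec (φ x)
      else 0

/-- Evaluation: on wire `i`, the evaluator holds `X i` for input wires; for an
XOR gate it XORs the two input labels; for a projection gate it decrypts the
table row selected by the pointer bits of the input label. -/
def Circuit.evalGC {nbar : ℕ} (C : Circuit nbar) {k : ℕ}
    (GCtab : (g : Fin C.q) → (n : ℕ) → Bits n → Bits k)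
    (H : Bits k → ℕ → Bits k) (X : ℕ → Bits k) (i : ℕ) : Bits k :=
  if hp : i < C.p then X i
  else if hq : i - C.p < C.q then
    match C.gates ⟨i - C.p, hq⟩ with
    | .xor a b _ _ _ _ => C.evalGC GCtab H X a + C.evalGC GCtab H X b
    | .proj a _ _ =>
        GCtab ⟨i - C.p, hq⟩ (C.ℓ a) (lsb (C.ℓ a) (C.evalGC GCtab H X a))
          + H (C.evalGC GCtab H X a) i
  else 0
termination_by i
decreasing_by all_goals (simp only [Fin.val_mk] at *; omega)

/-! Along the topological order, the evaluator's label on every wire `i` is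
`W_i^0 + R_{ℓ(i)}·v_i`. XOR gates preserve this because `v ↦ R·v` is linear. At a projection
gate with input label `W_a = W_a^0 + R_n·v_a`, the pointer bits are
`lsb_n W_a = v_a + lsb_n W_a^0` since `lsb_n ∘ R_n = id`, so the evaluator reads the row built
for `x = v_a`, and the hash mask `H(W_a, i)` cancels in characteristic 2. Decoding then removes
`lsb W_i^0` from `lsb W_i = lsb W_i^0 + v_i`. -/

section Bits

open Matrix

lemma lsb_add {k n : ℕ} (u w : Bits k) : lsb n (u + w) = lsb n u + lsb n w := by
  funext j
  simp only [lsb, Pi.add_apply]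
  split <;> simp

lemma lsb_add_mulVec {k n : ℕ} {M : Matrix (Fin k) (Fin n) (ZMod 2)}
    (hM : ∀ v, lsb n (M *ᵥ v) = v) (Z : Bits k) (v : Bits n) :
    lsb n (Z + M *ᵥ v) = v + lsb n Z := by
  rw [lsb_add, hM, add_comm]

lemma mulVec_castBits {k a b : ℕ} (h : a = b) (R : (n : ℕ) → Matrix (Fin k) (Fin n) (ZMod 2))
    (v : Bits a) : R b *ᵥ castBits h v = R a *ᵥ v := by
  subst h; rfl

end Bits

namespace Circuit

open Matrix

variable {nbar k : ℕ} (C : Circuit nbar) {i : ℕ}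

lemma evalGC_xor (hp : C.p ≤ i) (hq : i - C.p < C.q)
    (GCtab : (g : Fin C.q) → (n : ℕ) → Bits n → Bits k) (H : Bits k → ℕ → Bits k)
    (X : ℕ → Bits k) {a b : ℕ} {ha hb hla hlb}
    (hg : C.gates ⟨i - C.p, hq⟩ = .xor a b ha hb hla hlb) :
    C.evalGC GCtab H X i = C.evalGC GCtab H X a + C.evalGC GCtab H X b := by
  rw [evalGC, dif_neg (by omega), dif_pos hq, hg]

lemma evalGC_proj (hp : C.p ≤ i) (hq : i - C.p < C.q)
    (GCtab : (g : Fin C.q) → (n : ℕ) → Bits n → Bits k) (H : Bits k → ℕ → Bits k)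
    (X : ℕ → Bits k) {a : ℕ} {ha φ} (hg : C.gates ⟨i - C.p, hq⟩ = .proj a ha φ) :
    C.evalGC GCtab H X i =
      GCtab ⟨i - C.p, hq⟩ (C.ℓ a) (lsb (C.ℓ a) (C.evalGC GCtab H X a))
        + H (C.evalGC GCtab H X a) i := by
  rw [evalGC, dif_neg (by omega), dif_pos hq, hg]

lemma zeroLabel_xor (hp : C.p ≤ i) (hq : i - C.p < C.q)
    (W0 : ℕ → Bits k) {a b : ℕ} {ha hb hla hlb}
    (hg : C.gates ⟨i - C.p, hq⟩ = .xor a b ha hb hla hlb) :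
    C.zeroLabel W0 i = C.zeroLabel W0 a + C.zeroLabel W0 b := by
  rw [zeroLabel, dif_neg (by omega), dif_pos hq, hg]

lemma zeroLabel_proj (hp : C.p ≤ i) (hq : i - C.p < C.q)
    (W0 : ℕ → Bits k) {a : ℕ} {ha φ}
    (hg : C.gates ⟨i - C.p, hq⟩ = .proj a ha φ) :
    C.zeroLabel W0 i = W0 i := by
  rw [zeroLabel, dif_neg (by omega), dif_pos hq, hg]

lemma plainEval_xor (hp : C.p ≤ i) (hq : i - C.p < C.q)
    (x : (i : ℕ) → Bits (C.ℓ i)) {a b : ℕ} {ha hb hla hlb}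
    (hg : C.gates ⟨i - C.p, hq⟩ = .xor a b ha hb hla hlb) :
    C.plainEval x i =
      castBits (hla.trans (congrArg C.ℓ (Nat.add_sub_cancel' hp))) (C.plainEval x a)
        + castBits (hlb.trans (congrArg C.ℓ (Nat.add_sub_cancel' hp))) (C.plainEval x b) := by
  rw [plainEval, dif_neg (by omega), dif_pos hq]
  simp only [hg]

lemma plainEval_proj (hp : C.p ≤ i) (hq : i - C.p < C.q)
    (x : (i : ℕ) → Bits (C.ℓ i)) {a : ℕ} {ha φ}
    (hg : C.gates ⟨i - C.p, hq⟩ = .proj a ha φ) :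
    C.plainEval x i = castBits (congrArg C.ℓ (Nat.add_sub_cancel' hp)) (φ (C.plainEval x a)) := by
  rw [plainEval, dif_neg (by omega), dif_pos hq]
  simp only [hg]

lemma GC_proj (hp : C.p ≤ i) (hq : i - C.p < C.q)
    (R : (n : ℕ) → Matrix (Fin k) (Fin n) (ZMod 2))
    (H : Bits k → ℕ → Bits k) (W0 : ℕ → Bits k) {a : ℕ} {ha φ}
    (hg : C.gates ⟨i - C.p, hq⟩ = .proj a ha φ) (x : Bits (C.ℓ a)) :
    C.GC R H W0 ⟨i - C.p, hq⟩ (C.ℓ a) (x + lsb (C.ℓ a) (C.zeroLabel W0 a)) =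
      H (C.zeroLabel W0 a + R (C.ℓ a) *ᵥ x) i + C.zeroLabel W0 i
        + R (C.ℓ i) *ᵥ castBits (congrArg C.ℓ (Nat.add_sub_cancel' hp)) (φ x) := by
  rw [GC, hg, mulVec_castBits]
  simp only [dif_pos, add_assoc, ZModModule.add_self, add_zero, Nat.add_sub_cancel' hp]
  rfl

theorem evalGC_eq_zeroLabel_add_mulVec {κ : ℕ}
    (R : (n : ℕ) → Matrix (Fin (κ + nbar)) (Fin n) (ZMod 2))
    (hR : ∀ n, n ≤ nbar → ∀ v : Bits n, lsb n (R n *ᵥ v) = v)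
    (H : Bits (κ + nbar) → ℕ → Bits (κ + nbar)) (W0 : ℕ → Bits (κ + nbar))
    (x : (i : ℕ) → Bits (C.ℓ i)) (i : ℕ) :
    C.evalGC (C.GC R H W0) H (fun j => C.zeroLabel W0 j + R (C.ℓ j) *ᵥ x j) i
      = C.zeroLabel W0 i + R (C.ℓ i) *ᵥ C.plainEval x i := by
  induction i using Nat.strong_induction_on with
  | _ i IH =>
  rcases lt_or_ge i C.p with hin | hp
  · rw [evalGC, zeroLabel, plainEval]
    simp only [dif_pos hin]
  rcases lt_or_ge (i - C.p) C.q with hq | hout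
  swap
  · rw [evalGC, zeroLabel, plainEval]
    simp [not_lt.2 hp, not_lt.2 hout]
  cases hg : C.gates ⟨i - C.p, hq⟩ with
  | xor a b ha hb hla hlb =>
    simp only [Nat.add_sub_cancel' hp] at ha hb
    rw [C.evalGC_xor hp hq _ _ _ hg, C.zeroLabel_xor hp hq W0 hg, C.plainEval_xor hp hq x hg,
      IH a ha, IH b hb, mulVec_add, mulVec_castBits, mulVec_castBits]
    abel
  | proj a ha φ =>
    simp only [Nat.add_sub_cancel' hp] at ha
    rw [C.evalGC_proj hp hq _ _ _ hg, IH a ha,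
      lsb_add_mulVec (hR _ (C.hℓ a)), C.GC_proj hp hq R H W0 hg,
      C.zeroLabel_proj hp hq W0 hg, C.plainEval_proj hp hq x hg]
    rw [add_comm (H _ i + _ + _), ← add_assoc, ← add_assoc, ZModModule.add_self, zero_add]

end Circuit

/-- correctness of the garbling scheme Π, for every circuit,
input, hash function `H`, offset matrices `R_n` (whose bottom block acts as
the identity, i.e. `lsb_n (R_n·x) = x`) and every choice of zero-labels: the
label the evaluator computes on every wire `i` is `W_i^0 + R_{ℓ(i)}·v_i` where
`v_i` is the plaintext value of wire `i`, and hence decoding with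
`d_i = lsb_{ℓ(i)} (W_i^0)` returns `v_i` on every wire; in particular
`Decode(Eval(GC, Encode(e, x)), d) = f(x)`. -/
theorem garbling_scheme_correct (κ nbar : ℕ) (C : Circuit nbar)
    (H : Bits (κ + nbar) → ℕ → Bits (κ + nbar))
    (R : (n : ℕ) → Matrix (Fin (κ + nbar)) (Fin n) (ZMod 2))
    (hR : ∀ n, n ≤ nbar → ∀ x : Bits n, lsb n ((R n).mulVec x) = x)
    (W0 : ℕ → Bits (κ + nbar))
    (x : (i : ℕ) → Bits (C.ℓ i)) :
    let Z : ℕ → Bits (κ + nbar) := C.zeroLabel W0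
    let X : ℕ → Bits (κ + nbar) := fun i => Z i + (R (C.ℓ i)).mulVec (x i)
    let Lab : ℕ → Bits (κ + nbar) := C.evalGC (C.GC R H W0) H X
    let v : (i : ℕ) → Bits (C.ℓ i) := C.plainEval x
    ∀ i < C.p + C.q,
      Lab i = Z i + (R (C.ℓ i)).mulVec (v i) ∧
        lsb (C.ℓ i) (Z i) + lsb (C.ℓ i) (Lab i) = v i := by
  intro Z X Lab v i _
  have hLab : Lab i = Z i + (R (C.ℓ i)).mulVec (v i) :=
    C.evalGC_eq_zeroLabel_add_mulVec R hR H W0 x i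
  refine ⟨hLab, ?_⟩
  rw [hLab, lsb_add_mulVec (hR _ (C.hℓ i)), add_comm (v i), ← add_assoc, ZModModule.add_self,
    zero_add]
end
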